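/- For a sequence (f^k, h^k) generated by the algorithm, ‖h^k − f^k‖₂ → 0 and ‖f^{k+1} − f^k‖₂ → 0 as k → ∞. -/

import Mathlib

open Finset Filter Topology

noncomputable def meanV {n : ℕ} (f : Fin n → ℝ) : ℝ := (∑ i, f i) / n
noncomputable def TVfun {n : ℕ} (w : Fin n → Fin n → ℝ) (f : Fin n → ℝ) : ℝ :=
  (1/2) * ∑ i, ∑ j, w i j * |f i - f j|
noncomputable def Bfun {n : ℕ} (f : Fin n → ℝ) : ℝ := ∑ i, |f i - meanV f|
noncomputable def Efun {n : ℕ} (w : Fin n → Fin n → ℝ) (f : Fin n → ℝ) : ℝ :=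
  TVfun w f / Bfun f
noncomputable def norm2 {n : ℕ} (f : Fin n → ℝ) : ℝ := Real.sqrt (∑ i, (f i)^2)
noncomputable def dotV {n : ℕ} (u v : Fin n → ℝ) : ℝ := ∑ i, u i * v i
def IsSubgradient {n : ℕ} (F : (Fin n → ℝ) → ℝ) (f v : Fin n → ℝ) : Prop :=
  ∀ y, F f + dotV v (y - f) ≤ F y
def GraphConnected {n : ℕ} (w : Fin n → Fin n → ℝ) : Prop :=
  ∀ i j : Fin n, Relation.ReflTransGen (fun a b => 0 < w a b) i j
def Nonconstant {n : ℕ} (f : Fin n → ℝ) : Prop := ∃ i j, f i ≠ f j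
def signSet (t : ℝ) : Set ℝ := if t > 0 then {1} else if t < 0 then {-1} else Set.Icc (-1) 1
noncomputable def P0 {n : ℕ} (f : Fin n → ℝ) : Fin n → ℝ := fun i => f i - meanV f

/-! The proximal step is a descent step for the ratio `E = TV / B`: testing its minimality against
`u = f` and using the subgradient inequality for `B` gives
`E(f) ‖h - f‖² ≤ 2c (E(f) B(h) - TV(h)) = 2c B(h) (E(f) - E(h))`.
Hence the energies `E(f^k)` decrease; being nonnegative they converge, so their increments tend
to zero. Two uniform constants turn this into `‖h^k - f^k‖ → 0`: `E ≥ α > 0` on nonzero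
mean-zero vectors (connectivity, and compactness of the mean-zero unit sphere), and
`B(h^k) ≤ √n ‖h^k‖ ≤ √n (‖f^k‖ + ‖h^k - f^k‖)`, which together with `‖h^k - f^k‖² ≤ 2c B(h^k)`
bounds `B(h^k)`. Finally, once `‖f^k‖ = 1`, normalising `h^k` moves it by at most
`|‖h^k‖ - ‖f^k‖| ≤ ‖h^k - f^k‖`. -/

lemma norm_inv_norm_smul_sub_le {E : Type*} [NormedAddCommGroup E] [NormedSpace ℝ E] (x : E)
    {y : E} (hy : ‖y‖ = 1) : ‖‖x‖⁻¹ • x - y‖ ≤ 2 * ‖x - y‖ := by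
  rcases eq_or_ne x 0 with rfl | hx
  · simp [hy]
  have hnormalize : ‖‖x‖⁻¹ • x - x‖ = |‖y‖ - ‖x‖| := by
    rw [show ‖x‖⁻¹ • x - x = (‖x‖⁻¹ - 1) • x by rw [sub_smul, one_smul], norm_smul,
      Real.norm_eq_abs, ← abs_norm x, ← abs_mul, abs_norm, sub_mul,
      inv_mul_cancel₀ (norm_ne_zero_iff.mpr hx), one_mul, hy, abs_sub_comm]
  calc ‖‖x‖⁻¹ • x - y‖ ≤ ‖‖x‖⁻¹ • x - x‖ + ‖x - y‖ := norm_sub_le_norm_sub_add_norm_sub _ _ _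
    _ ≤ ‖y - x‖ + ‖x - y‖ := by rw [hnormalize]; gcongr; exact abs_norm_sub_norm_le y x
    _ = 2 * ‖x - y‖ := by rw [norm_sub_rev]; ring

lemma tendsto_zero_of_sq_le_mul_sub_succ {a E : ℕ → ℝ} {K : ℝ} (hK : 0 < K) (hE : ∀ k, 0 ≤ E k)
    (ha : ∀ k, 0 ≤ a k) (hdesc : ∀ k, a k ^ 2 ≤ K * (E k - E (k + 1))) :
    Tendsto a atTop (𝓝 0) := by
  have hanti : Antitone E :=
    antitone_nat_of_succ_le fun k => by nlinarith [hdesc k, sq_nonneg (a k)]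
  have hlim := tendsto_atTop_ciInf hanti ⟨0, by rintro _ ⟨k, rfl⟩; exact hE k⟩
  have hgap : Tendsto (fun k => K * (E k - E (k + 1))) atTop (𝓝 0) := by
    simpa using (hlim.sub (hlim.comp (tendsto_add_atTop_nat 1))).const_mul K
  have hsq := squeeze_zero (fun k => sq_nonneg (a k)) hdesc hgap
  simpa [Real.sqrt_sq (ha _)] using hsq.sqrt

section Vectors
variable {n : ℕ}

lemma norm2_eq_norm (f : Fin n → ℝ) : norm2 f = ‖WithLp.toLp 2 f‖ := by
  simp [norm2, EuclideanSpace.norm_eq, sq_abs]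

lemma norm2_nonneg (f : Fin n → ℝ) : 0 ≤ norm2 f := Real.sqrt_nonneg _

lemma sq_norm2 (f : Fin n → ℝ) : norm2 f ^ 2 = ∑ i, f i ^ 2 :=
  Real.sq_sqrt (by positivity)

lemma norm2_smul (t : ℝ) (f : Fin n → ℝ) : norm2 (t • f) = |t| * norm2 f := by
  simp only [norm2_eq_norm, WithLp.toLp_smul, norm_smul, Real.norm_eq_abs]

lemma norm2_neg (f : Fin n → ℝ) : norm2 (-f) = norm2 f := by
  simp only [norm2_eq_norm, WithLp.toLp_neg, norm_neg]

lemma norm2_pos {f : Fin n → ℝ} (hf : f ≠ 0) : 0 < norm2 f := by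
  simpa [norm2_eq_norm] using hf

lemma norm2_add_le (a b : Fin n → ℝ) : norm2 (a + b) ≤ norm2 a + norm2 b := by
  simpa only [norm2_eq_norm, WithLp.toLp_add] using norm_add_le _ _

lemma norm2_inv_norm2_smul_sub_le (x : Fin n → ℝ) {y : Fin n → ℝ} (hy : norm2 y = 1) :
    norm2 ((norm2 x)⁻¹ • x - y) ≤ 2 * norm2 (x - y) := by
  simp only [norm2_eq_norm, WithLp.toLp_sub, WithLp.toLp_smul] at hy ⊢
  exact norm_inv_norm_smul_sub_le _ hy

lemma norm2_inv_norm2_smul {f : Fin n → ℝ} (hf : f ≠ 0) : norm2 ((norm2 f)⁻¹ • f) = 1 := by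
  rw [norm2_smul, abs_inv, abs_of_nonneg (norm2_nonneg f), inv_mul_cancel₀ (norm2_pos hf).ne']

lemma dotV_comm (a b : Fin n → ℝ) : dotV a b = dotV b a := by
  simp only [dotV, mul_comm]

lemma dotV_smul_right (a b : Fin n → ℝ) (t : ℝ) : dotV a (t • b) = t * dotV a b := by
  simp only [dotV, Pi.smul_apply, smul_eq_mul, Finset.mul_sum]
  exact Finset.sum_congr rfl fun i _ => by ring

lemma dotV_const_right (a : Fin n → ℝ) (t : ℝ) : dotV a (fun _ => t) = t * ∑ i, a i := by
  simp only [dotV, Finset.mul_sum, mul_comm]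

lemma sq_norm2_sub (a b : Fin n → ℝ) :
    norm2 (a - b) ^ 2 = norm2 a ^ 2 - 2 * dotV a b + norm2 b ^ 2 := by
  simp only [sq_norm2, dotV, Pi.sub_apply, Finset.mul_sum, ← Finset.sum_sub_distrib,
    ← Finset.sum_add_distrib]
  exact Finset.sum_congr rfl fun i _ => by ring

lemma sq_norm2_const (t : ℝ) : norm2 (fun _ : Fin n => t) ^ 2 = n * t ^ 2 := by
  simp [sq_norm2]

lemma sum_eq_mul_meanV (f : Fin n → ℝ) : ∑ i, f i = n * meanV f := by
  rcases eq_or_ne n 0 with rfl | hn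
  · simp
  · rw [meanV, mul_div_cancel₀ _ (Nat.cast_ne_zero.mpr hn)]

lemma meanV_add (f g : Fin n → ℝ) : meanV (f + g) = meanV f + meanV g := by
  simp only [meanV, Pi.add_apply, Finset.sum_add_distrib, add_div]

lemma meanV_smul (t : ℝ) (f : Fin n → ℝ) : meanV (t • f) = t * meanV f := by
  simp only [meanV, Pi.smul_apply, smul_eq_mul, ← Finset.mul_sum, mul_div_assoc]

lemma meanV_add_const (hn : n ≠ 0) (f : Fin n → ℝ) (t : ℝ) :
    meanV (f + fun _ => t) = meanV f + t := by
  simp only [meanV, Pi.add_apply, Finset.sum_add_distrib, Finset.sum_const, Finset.card_univ,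
    Fintype.card_fin, nsmul_eq_mul, add_div]
  field_simp

lemma Bfun_le_sqrt_mul_norm2 {f : Fin n → ℝ} (hf : meanV f = 0) :
    Bfun f ≤ Real.sqrt n * norm2 f := by
  have hcs : (∑ i, |f i|) ^ 2 ≤ n * ∑ i, f i ^ 2 := by
    simpa [sq_abs] using sq_sum_le_card_mul_sum_sq (s := Finset.univ) (f := fun i => |f i|)
  calc Bfun f = Real.sqrt ((∑ i, |f i|) ^ 2) := by
        simp [Bfun, hf, Real.sqrt_sq (Finset.sum_nonneg fun i _ => abs_nonneg (f i))]
    _ ≤ Real.sqrt (n * ∑ i, f i ^ 2) := Real.sqrt_le_sqrt hcs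
    _ = Real.sqrt n * norm2 f := by rw [Real.sqrt_mul (Nat.cast_nonneg n), norm2]

end Vectors

section Functionals
variable {n : ℕ}

lemma continuous_meanV : Continuous (meanV : (Fin n → ℝ) → ℝ) := by
  unfold meanV; fun_prop

lemma continuous_TVfun (w : Fin n → Fin n → ℝ) : Continuous (TVfun w) := by
  unfold TVfun; fun_prop

lemma continuous_Bfun : Continuous (Bfun : (Fin n → ℝ) → ℝ) :=
  continuous_finsetSum _ fun i _ => ((continuous_apply i).sub continuous_meanV).abs

lemma TVfun_nonneg {w : Fin n → Fin n → ℝ} (hnn : ∀ i j, 0 ≤ w i j) (f : Fin n → ℝ) :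
    0 ≤ TVfun w f :=
  mul_nonneg (by norm_num) (Finset.sum_nonneg fun i _ => Finset.sum_nonneg fun j _ =>
    mul_nonneg (hnn i j) (abs_nonneg _))

lemma Bfun_nonneg (f : Fin n → ℝ) : 0 ≤ Bfun f := by
  unfold Bfun; positivity

lemma Efun_nonneg {w : Fin n → Fin n → ℝ} (hnn : ∀ i j, 0 ≤ w i j) (f : Fin n → ℝ) :
    0 ≤ Efun w f :=
  div_nonneg (TVfun_nonneg hnn f) (Bfun_nonneg f)

lemma TVfun_smul (w : Fin n → Fin n → ℝ) (t : ℝ) (f : Fin n → ℝ) :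
    TVfun w (t • f) = |t| * TVfun w f := by
  simp only [TVfun, Pi.smul_apply, smul_eq_mul, ← mul_sub, abs_mul, Finset.mul_sum]
  exact Finset.sum_congr rfl fun i _ => Finset.sum_congr rfl fun j _ => by ring

lemma Bfun_smul (t : ℝ) (f : Fin n → ℝ) : Bfun (t • f) = |t| * Bfun f := by
  simp only [Bfun, meanV_smul, Pi.smul_apply, smul_eq_mul, ← mul_sub, abs_mul, Finset.mul_sum]

lemma Efun_smul (w : Fin n → Fin n → ℝ) {t : ℝ} (ht : t ≠ 0) (f : Fin n → ℝ) :
    Efun w (t • f) = Efun w f := by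
  rw [Efun, Efun, TVfun_smul, Bfun_smul, mul_div_mul_left _ _ (abs_ne_zero.mpr ht)]

lemma Efun_inv_norm2_smul (w : Fin n → Fin n → ℝ) (f : Fin n → ℝ) :
    Efun w ((norm2 f)⁻¹ • f) = Efun w f := by
  rcases eq_or_ne f 0 with rfl | hf
  · rw [smul_zero]
  · exact Efun_smul w (inv_ne_zero (norm2_pos hf).ne') f

lemma TVfun_sub_const (w : Fin n → Fin n → ℝ) (f : Fin n → ℝ) (t : ℝ) :
    TVfun w (f - fun _ => t) = TVfun w f := by
  simp [TVfun]

lemma Bfun_add_const (f : Fin n → ℝ) (t : ℝ) : Bfun (f + fun _ => t) = Bfun f := by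
  rcases eq_or_ne n 0 with rfl | hn
  · simp [Bfun]
  · simp [Bfun, meanV_add_const hn]

lemma Bfun_pos {f : Fin n → ℝ} (hf : meanV f = 0) (hf0 : f ≠ 0) : 0 < Bfun f := by
  obtain ⟨i, hi⟩ := Function.ne_iff.mp hf0
  simp only [Bfun, hf, sub_zero]
  exact Finset.sum_pos' (fun j _ => abs_nonneg _) ⟨i, Finset.mem_univ i, abs_pos.mpr hi⟩

lemma eq_of_TVfun_eq_zero {w : Fin n → Fin n → ℝ} (hnn : ∀ i j, 0 ≤ w i j)
    (hconn : GraphConnected w) {f : Fin n → ℝ} (hTV : TVfun w f = 0) (i j : Fin n) :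
    f i = f j := by
  have hterm : ∀ a b, w a b * |f a - f b| = 0 := by
    have hsum : ∑ a, ∑ b, w a b * |f a - f b| = 0 := by simpa [TVfun] using hTV
    have hnonneg : ∀ a b, 0 ≤ w a b * |f a - f b| := fun a b => by have := hnn a b; positivity
    rw [Finset.sum_eq_zero_iff_of_nonneg fun a _ => Finset.sum_nonneg fun b _ => hnonneg a b]
      at hsum
    intro a b
    exact (Finset.sum_eq_zero_iff_of_nonneg fun b _ => hnonneg a b).mp
      (hsum a (Finset.mem_univ a)) b (Finset.mem_univ b)
  induction hconn i j with
  | refl => rfl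
  | tail _ hab ih =>
    refine ih.trans (sub_eq_zero.mp (abs_eq_zero.mp ?_))
    exact (mul_eq_zero.mp (hterm _ _)).resolve_left hab.ne'

lemma TVfun_pos {w : Fin n → Fin n → ℝ} (hnn : ∀ i j, 0 ≤ w i j) (hconn : GraphConnected w)
    {f : Fin n → ℝ} (hf : meanV f = 0) (hf0 : f ≠ 0) : 0 < TVfun w f := by
  refine (TVfun_nonneg hnn f).lt_of_ne fun hTV => hf0 ?_
  obtain ⟨i, -⟩ := Function.ne_iff.mp hf0
  have hconst : f = fun _ => f i := funext fun j => eq_of_TVfun_eq_zero hnn hconn hTV.symm j i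
  have hsum := sum_eq_mul_meanV f
  rw [hf, mul_zero, hconst, Finset.sum_const, Finset.card_univ, Fintype.card_fin, nsmul_eq_mul,
    mul_eq_zero, Nat.cast_eq_zero] at hsum
  rw [hconst, hsum.resolve_left (Nat.pos_iff_ne_zero.mp i.pos)]
  rfl

lemma Efun_pos {w : Fin n → Fin n → ℝ} (hnn : ∀ i j, 0 ≤ w i j) (hconn : GraphConnected w)
    {f : Fin n → ℝ} (hf : meanV f = 0) (hf0 : f ≠ 0) : 0 < Efun w f :=
  div_pos (TVfun_pos hnn hconn hf hf0) (Bfun_pos hf hf0)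

lemma exists_pos_le_Efun {w : Fin n → Fin n → ℝ} (hnn : ∀ i j, 0 ≤ w i j)
    (hconn : GraphConnected w) :
    ∃ α > 0, ∀ f : Fin n → ℝ, meanV f = 0 → f ≠ 0 → α ≤ Efun w f := by
  set K : Set (EuclideanSpace ℝ (Fin n)) := Metric.sphere 0 1 ∩ {x | meanV x.ofLp = 0}
  have hKc : IsCompact K := (isCompact_sphere 0 1).inter_right
    (isClosed_eq (continuous_meanV.comp (PiLp.continuous_ofLp 2 _)) continuous_const)
  have hK : ∀ x ∈ K, meanV x.ofLp = 0 ∧ x.ofLp ≠ 0 := fun x hx =>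
    ⟨hx.2, fun h0 => by simpa [(WithLp.ofLp_eq_zero 2).mp h0] using hx.1⟩
  have hnormalize : ∀ f, meanV f = 0 → f ≠ 0 → ∃ x ∈ K, Efun w x.ofLp = Efun w f :=
    fun f hf hf0 => ⟨WithLp.toLp 2 ((norm2 f)⁻¹ • f),
      ⟨by rw [mem_sphere_zero_iff_norm, ← norm2_eq_norm]
          exact norm2_inv_norm2_smul hf0, by simp [meanV_smul, hf]⟩,
      Efun_inv_norm2_smul w f⟩
  rcases K.eq_empty_or_nonempty with hempty | hne
  · refine ⟨1, one_pos, fun f hf hf0 => ?_⟩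
    obtain ⟨x, hx, -⟩ := hnormalize f hf hf0
    simp [hempty] at hx
  have hcont : ContinuousOn (fun x : EuclideanSpace ℝ (Fin n) => Efun w x.ofLp) K :=
    ((continuous_TVfun w).comp (PiLp.continuous_ofLp 2 _)).continuousOn.div
      (continuous_Bfun.comp (PiLp.continuous_ofLp 2 _)).continuousOn
      fun x hx => (Bfun_pos (hK x hx).1 (hK x hx).2).ne'
  obtain ⟨x₀, hx₀, hmin⟩ := hKc.exists_isMinOn hne hcont
  refine ⟨Efun w x₀.ofLp, Efun_pos hnn hconn (hK x₀ hx₀).1 (hK x₀ hx₀).2, fun f hf hf0 => ?_⟩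
  obtain ⟨x, hx, hEx⟩ := hnormalize f hf hf0
  exact hEx ▸ hmin hx

lemma meanV_eq_zero_of_isSubgradient_Bfun {f v : Fin n → ℝ} (hv : IsSubgradient Bfun f v) :
    meanV v = 0 := by
  have hup := hv (f + fun _ => 1)
  have hdown := hv (f + fun _ => -1)
  simp only [Bfun_add_const, add_sub_cancel_left, dotV_const_right] at hup hdown
  simp [meanV, show ∑ i, v i = 0 by linarith]

end Functionals

def IsProxStep {n : ℕ} (w : Fin n → Fin n → ℝ) (c : ℝ) (f v h : Fin n → ℝ) : Prop :=
  ∀ u, TVfun w h + Efun w f * norm2 (h - (f + c • v)) ^ 2 / (2 * c)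
    ≤ TVfun w u + Efun w f * norm2 (u - (f + c • v)) ^ 2 / (2 * c)

section ProxStep
variable {n : ℕ} {w : Fin n → Fin n → ℝ} {c : ℝ} {f v h : Fin n → ℝ}

/-- Shifting `h` by the constant `t = mean h - mean g` leaves `TV` unchanged and lowers
`‖h - g‖²` by `n t²`. -/
lemma meanV_eq_of_isProxStep (hc : 0 < c) (hE : 0 < Efun w f) (hh : IsProxStep w c f v h) :
    meanV h = meanV (f + c • v) := by
  set g := f + c • v
  set t := meanV h - meanV g
  have hshift : norm2 (h - (fun _ => t) - g) ^ 2 = norm2 (h - g) ^ 2 - n * t ^ 2 := by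
    rw [sub_right_comm, sq_norm2_sub, sq_norm2_const, dotV_const_right]
    simp only [Pi.sub_apply]
    rw [Finset.sum_sub_distrib, sum_eq_mul_meanV h, sum_eq_mul_meanV g]
    ring
  have hmin := hh (h - fun _ => t)
  rw [TVfun_sub_const, hshift, add_le_add_iff_left, div_le_div_iff_of_pos_right (by positivity),
    mul_le_mul_iff_of_pos_left hE] at hmin
  rcases eq_or_ne n 0 with rfl | hn
  · simp [meanV]
  have ht : t ^ 2 = 0 := le_antisymm (by
    have : (0 : ℝ) < n := Nat.cast_pos.mpr (Nat.pos_of_ne_zero hn)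
    nlinarith) (sq_nonneg t)
  exact sub_eq_zero.mp (pow_eq_zero_iff two_ne_zero |>.mp ht)

lemma TVfun_add_le_Efun_mul_Bfun (hc : 0 < c) (hE : 0 ≤ Efun w f) (hBf : Bfun f ≠ 0)
    (hv : IsSubgradient Bfun f v) (hh : IsProxStep w c f v h) :
    TVfun w h + Efun w f * norm2 (h - f) ^ 2 / (2 * c) ≤ Efun w f * Bfun h := by
  have hmin := hh f
  have hTVf : TVfun w f = Efun w f * Bfun f := (div_mul_cancel₀ _ hBf).symm
  have hexp : norm2 (h - (f + c • v)) ^ 2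
      = norm2 (h - f) ^ 2 - 2 * c * dotV v (h - f) + c ^ 2 * norm2 v ^ 2 := by
    rw [← sub_sub, sq_norm2_sub, norm2_smul, dotV_smul_right, dotV_comm, mul_pow, sq_abs]
    ring
  have hexp' : norm2 (f - (f + c • v)) ^ 2 = c ^ 2 * norm2 v ^ 2 := by
    rw [sub_add_cancel_left, norm2_neg, norm2_smul, mul_pow, sq_abs]
  rw [hexp, hexp', hTVf] at hmin
  have hsplit : Efun w f * (norm2 (h - f) ^ 2 - 2 * c * dotV v (h - f) + c ^ 2 * norm2 v ^ 2)
      / (2 * c) = Efun w f * norm2 (h - f) ^ 2 / (2 * c) - Efun w f * dotV v (h - f)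
        + Efun w f * (c ^ 2 * norm2 v ^ 2) / (2 * c) := by
    field_simp
  nlinarith [mul_le_mul_of_nonneg_left (hv h) hE]

end ProxStep

structure IsAlgorithmStep {n : ℕ} (w : Fin n → Fin n → ℝ) (c : ℝ) (f v h : Fin n → ℝ) : Prop where
  meanV_eq_zero : meanV f = 0
  ne_zero : f ≠ 0
  isSubgradient : IsSubgradient Bfun f v
  isProxStep : IsProxStep w c f v h

namespace IsAlgorithmStep
variable {n : ℕ} {w : Fin n → Fin n → ℝ} {c : ℝ} {f v h : Fin n → ℝ}

lemma Efun_pos (hs : IsAlgorithmStep w c f v h) (hnn : ∀ i j, 0 ≤ w i j)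
    (hconn : GraphConnected w) : 0 < Efun w f :=
  _root_.Efun_pos hnn hconn hs.meanV_eq_zero hs.ne_zero

lemma meanV_prox_eq_zero (hs : IsAlgorithmStep w c f v h) (hnn : ∀ i j, 0 ≤ w i j)
    (hconn : GraphConnected w) (hc : 0 < c) : meanV h = 0 := by
  rw [meanV_eq_of_isProxStep hc (hs.Efun_pos hnn hconn) hs.isProxStep, meanV_add, meanV_smul,
    hs.meanV_eq_zero, meanV_eq_zero_of_isSubgradient_Bfun hs.isSubgradient, mul_zero, add_zero]

lemma Efun_mul_sq_norm2_prox_sub_le (hs : IsAlgorithmStep w c f v h) (hnn : ∀ i j, 0 ≤ w i j)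
    (hconn : GraphConnected w) (hc : 0 < c) :
    Efun w f * norm2 (h - f) ^ 2 ≤ 2 * c * (Efun w f * Bfun h - TVfun w h) := by
  have := TVfun_add_le_Efun_mul_Bfun hc (hs.Efun_pos hnn hconn).le
    (Bfun_pos hs.meanV_eq_zero hs.ne_zero).ne' hs.isSubgradient hs.isProxStep
  rwa [← le_sub_iff_add_le', div_le_iff₀' (by positivity)] at this

lemma Bfun_prox_pos (hs : IsAlgorithmStep w c f v h) (hnn : ∀ i j, 0 ≤ w i j)
    (hconn : GraphConnected w) (hc : 0 < c) : 0 < Bfun h := by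
  refine (Bfun_nonneg h).lt_of_ne fun hB => (Bfun_pos hs.meanV_eq_zero hs.ne_zero).ne' ?_
  have hdesc := hs.Efun_mul_sq_norm2_prox_sub_le hnn hconn hc
  rw [← hB, mul_zero, zero_sub] at hdesc
  have hhf : h = f := by
    by_contra hne
    have hS := mul_pos (hs.Efun_pos hnn hconn) (pow_pos (norm2_pos (sub_ne_zero.mpr hne)) 2)
    nlinarith [mul_nonneg hc.le (TVfun_nonneg hnn h)]
  rw [← hhf, hB]

lemma prox_ne_zero (hs : IsAlgorithmStep w c f v h) (hnn : ∀ i j, 0 ≤ w i j)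
    (hconn : GraphConnected w) (hc : 0 < c) : h ≠ 0 := by
  rintro rfl
  simpa [Bfun, meanV] using hs.Bfun_prox_pos hnn hconn hc

lemma normalize (hs : IsAlgorithmStep w c f v h) (hnn : ∀ i j, 0 ≤ w i j)
    (hconn : GraphConnected w) (hc : 0 < c) :
    meanV ((norm2 h)⁻¹ • h) = 0 ∧ (norm2 h)⁻¹ • h ≠ 0 := by
  have hh := hs.prox_ne_zero hnn hconn hc
  rw [meanV_smul, hs.meanV_prox_eq_zero hnn hconn hc]
  exact ⟨mul_zero _, smul_ne_zero (inv_ne_zero (norm2_pos hh).ne') hh⟩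

lemma sq_norm2_prox_sub_le (hs : IsAlgorithmStep w c f v h) (hnn : ∀ i j, 0 ≤ w i j)
    (hconn : GraphConnected w) (hc : 0 < c) : norm2 (h - f) ^ 2 ≤ 2 * c * Bfun h := by
  have hdesc := hs.Efun_mul_sq_norm2_prox_sub_le hnn hconn hc
  refine le_of_mul_le_mul_left ?_ (hs.Efun_pos hnn hconn)
  nlinarith [TVfun_nonneg hnn h]

lemma Bfun_prox_le (hs : IsAlgorithmStep w c f v h) (hnn : ∀ i j, 0 ≤ w i j)
    (hconn : GraphConnected w) (hc : 0 < c) :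
    Bfun h ≤ Real.sqrt n * (2 * norm2 f + 2 * c * Real.sqrt n) := by
  have hsn := Real.sqrt_nonneg n
  have hBh : Bfun h ≤ Real.sqrt n * (norm2 f + norm2 (h - f)) := by
    refine (Bfun_le_sqrt_mul_norm2 (hs.meanV_prox_eq_zero hnn hconn hc)).trans ?_
    gcongr
    simpa using norm2_add_le f (h - f)
  have hx := norm2_nonneg (h - f)
  have hfn := norm2_nonneg f
  have hx2 : norm2 (h - f) ^ 2 ≤ 2 * c * Real.sqrt n * (norm2 f + norm2 (h - f)) := by
    nlinarith [hs.sq_norm2_prox_sub_le hnn hconn hc]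
  have hcn : 0 ≤ 2 * c * Real.sqrt n := by positivity
  have hdist : norm2 (h - f) ≤ norm2 f + 2 * c * Real.sqrt n := by nlinarith
  nlinarith

lemma sq_norm2_prox_sub_le_mul_Efun_sub (hs : IsAlgorithmStep w c f v h)
    (hnn : ∀ i j, 0 ≤ w i j) (hconn : GraphConnected w) (hc : 0 < c) {α C : ℝ} (hα : 0 < α)
    (hαf : α ≤ Efun w f) (hC : Bfun h ≤ C) :
    norm2 (h - f) ^ 2 ≤ 2 * c * C / α * (Efun w f - Efun w h) := by
  have hE := hs.Efun_pos hnn hconn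
  have hBh := hs.Bfun_prox_pos hnn hconn hc
  have hdesc := hs.Efun_mul_sq_norm2_prox_sub_le hnn hconn hc
  rw [show TVfun w h = Bfun h * Efun w h from (mul_div_cancel₀ _ hBh.ne').symm] at hdesc
  have hgap : 0 ≤ Efun w f - Efun w h := by
    refine (mul_nonneg_iff_of_pos_left (by positivity : 0 < 2 * c * Bfun h)).mp ?_
    nlinarith [mul_nonneg hE.le (sq_nonneg (norm2 (h - f)))]
  rw [div_mul_eq_mul_div, le_div_iff₀ hα]
  calc norm2 (h - f) ^ 2 * α ≤ Efun w f * norm2 (h - f) ^ 2 := by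
        rw [mul_comm]; gcongr
    _ ≤ 2 * c * Bfun h * (Efun w f - Efun w h) := by linarith
    _ ≤ 2 * c * C * (Efun w f - Efun w h) := by gcongr

end IsAlgorithmStep

theorem stmt12_general {n : ℕ} (w : Fin n → Fin n → ℝ)
    (hnn : ∀ i j, 0 ≤ w i j)
    (hconn : GraphConnected w) (c : ℝ) (hc : 0 < c)
    (f v h : ℕ → Fin n → ℝ)
    (hf0 : meanV (f 0) = 0) (hf0nz : f 0 ≠ 0)
    (hv : ∀ k, IsSubgradient Bfun (f k) (v k))
    (hmin : ∀ k, ∀ u : Fin n → ℝ,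
      TVfun w (h k) + Efun w (f k) * norm2 (h k - (f k + c • v k))^2 / (2*c)
        ≤ TVfun w u + Efun w (f k) * norm2 (u - (f k + c • v k))^2 / (2*c))
    (hnext : ∀ k, f (k+1) = (norm2 (h k))⁻¹ • h k) :
    Tendsto (fun k => norm2 (h k - f k)) atTop (𝓝 0) ∧
    Tendsto (fun k => norm2 (f (k+1) - f k)) atTop (𝓝 0) := by
  have hs (k : ℕ) : IsAlgorithmStep w c (f k) (v k) (h k) := by
    induction k with
    | zero => exact ⟨hf0, hf0nz, hv 0, hmin 0⟩
    | succ k ih =>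
      obtain ⟨hmean, hne⟩ := ih.normalize hnn hconn hc
      rw [← hnext k] at hmean hne
      exact ⟨hmean, hne, hv _, hmin _⟩
  have hunit (k : ℕ) : norm2 (f (k + 1)) = 1 := by
    rw [hnext k]; exact norm2_inv_norm2_smul ((hs k).prox_ne_zero hnn hconn hc)
  have hM (k : ℕ) : norm2 (f k) ≤ max (norm2 (f 0)) 1 := by
    cases k with
    | zero => exact le_max_left _ _
    | succ k => exact (hunit k).trans_le (le_max_right _ _)
  obtain ⟨C, hC⟩ : ∃ C, ∀ k, Bfun (h k) ≤ C :=
    ⟨Real.sqrt n * (2 * max (norm2 (f 0)) 1 + 2 * c * Real.sqrt n), fun k =>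
      ((hs k).Bfun_prox_le hnn hconn hc).trans (by gcongr; exact hM k)⟩
  have hCpos : 0 < C := ((hs 0).Bfun_prox_pos hnn hconn hc).trans_le (hC 0)
  obtain ⟨α, hα, hαle⟩ := exists_pos_le_Efun hnn hconn
  have hfirst : Tendsto (fun k => norm2 (h k - f k)) atTop (𝓝 0) := by
    refine tendsto_zero_of_sq_le_mul_sub_succ (K := 2 * c * C / α) (by positivity)
      (fun k => Efun_nonneg hnn (f k)) (fun k => norm2_nonneg _) fun k => ?_
    rw [hnext k, Efun_inv_norm2_smul]
    exact (hs k).sq_norm2_prox_sub_le_mul_Efun_sub hnn hconn hc hα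
      (hαle _ (hs k).meanV_eq_zero (hs k).ne_zero) (hC k)
  refine ⟨hfirst, squeeze_zero' (Eventually.of_forall fun k => norm2_nonneg _) ?_
    (by simpa using hfirst.const_mul 2)⟩
  filter_upwards [eventually_ge_atTop 1] with k hk
  obtain ⟨k, rfl⟩ := Nat.exists_eq_add_of_le' hk
  rw [hnext (k + 1)]
  exact norm2_inv_norm2_smul_sub_le _ (hunit k)

theorem stmt12 {n : ℕ} (w : Fin n → Fin n → ℝ)
    (hsym : ∀ i j, w i j = w j i) (hnn : ∀ i j, 0 ≤ w i j)
    (hconn : GraphConnected w) (c : ℝ) (hc : 0 < c)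
    (f v h : ℕ → Fin n → ℝ)
    (hf0 : meanV (f 0) = 0) (hf0nz : f 0 ≠ 0)
    (hv : ∀ k, IsSubgradient Bfun (f k) (v k))
    (hmin : ∀ k, ∀ u : Fin n → ℝ,
      TVfun w (h k) + Efun w (f k) * norm2 (h k - (f k + c • v k))^2 / (2*c)
        ≤ TVfun w u + Efun w (f k) * norm2 (u - (f k + c • v k))^2 / (2*c))
    (hnext : ∀ k, f (k+1) = (norm2 (h k))⁻¹ • h k) :
    Tendsto (fun k => norm2 (h k - f k)) atTop (𝓝 0) ∧
    Tendsto (fun k => norm2 (f (k+1) - f k)) atTop (𝓝 0) :=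
  stmt12_general w hnn hconn c hc f v h hf0 hf0nz hv hmin hnext
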